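/- Let κ ∈ ℝ, α ≥ 0, q ∈ (0,1) and ψ ≥ 0. If (q,ψ) solves the fixed-point relations ψ = R_κ(q,α) and q = P(ψ), then α ∫ 𝓔((κ − q^{1/2}z)/√(1−q)) · ((κ − q^{−1/2}z)/√(1−q)) φ(z) dz = ψ(1−q). -/

import Mathlib

/-!
Gaussian integration by parts, `∫ h' φ = ∫ z h φ`, applied to `h(z) = 𝓔(a + b z)` with
`a = κ/√(1-q)` and `b = -√q/√(1-q)`: since `𝓔' = 𝓔 (𝓔 - x)`, it gives
`∫ 𝓔(u) (u + z/b) φ = ∫ 𝓔(u)² φ` for `u = a + b z`. Here `u + z/b = (κ - z/√q)/√(1-q)`,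
and `α ∫ 𝓔(u)² φ = (1-q) R_κ(q,α)`, which is `(1-q) ψ` by the first fixed-point relation.
All these integrals converge because of the Mills-ratio bound `𝓔(x) ≤ |x| + 1`.
-/

open MeasureTheory Real Set Filter

noncomputable section

/-- The standard gaussian density `φ(x) = exp(-x²/2)/√(2π)`. -/
def gphi (x : ℝ) : ℝ := Real.exp (-x ^ 2 / 2) / Real.sqrt (2 * Real.pi)

/-- The complementary gaussian distribution function `Φ̄(x) = ∫_x^∞ φ(u) du`. -/
def Phibar (x : ℝ) : ℝ := ∫ u in Set.Ioi x, gphi u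

/-- `𝓔(x) = φ(x) / Φ̄(x)`. -/
def gaussE (x : ℝ) : ℝ := gphi x / Phibar x

/-- `F_q(x) = 𝓔((κ - x)/√(1-q)) / √(1-q)` (with threshold `κ`). -/
def Fq (κ q x : ℝ) : ℝ := gaussE ((κ - x) / Real.sqrt (1 - q)) / Real.sqrt (1 - q)

/-- `P(ψ) = ∫ tanh(√ψ z)² φ(z) dz`. -/
def Pfun (ψ : ℝ) : ℝ := ∫ z : ℝ, Real.tanh (Real.sqrt ψ * z) ^ 2 * gphi z

/-- `R_κ(q, α) = α ∫ F_q(√q z)² φ(z) dz`. -/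
def Rfun (κ q α : ℝ) : ℝ := α * ∫ z : ℝ, Fq κ q (Real.sqrt q * z) ^ 2 * gphi z

/-- `𝒢_κ(α, q, ψ)`. -/
def Gfun (κ α q ψ : ℝ) : ℝ :=
  -(ψ * (1 - q)) / 2 + (∫ z : ℝ, Real.log (2 * Real.cosh (Real.sqrt ψ * z)) * gphi z)
    + α * ∫ z : ℝ, Real.log (Phibar ((κ - Real.sqrt q * z) / Real.sqrt (1 - q))) * gphi z

def alphaLB : ℝ := 0.833078599
def alphaUB : ℝ := 0.833078600
def qLB : ℝ := 0.56394907949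
def qLU : ℝ := 0.56394907950
def qUL : ℝ := 0.56394908029
def qUB : ℝ := 0.56394908030
def psiLB : ℝ := 2.5763513100
def psiLU : ℝ := 2.5763513103
def psiUL : ℝ := 2.5763513221
def psiUB : ℝ := 2.5763513224

lemma gphi_pos (x : ℝ) : 0 < gphi x := by
  unfold gphi; positivity

lemma continuous_gphi : Continuous gphi := by
  unfold gphi; fun_prop

lemma gphi_eq_mul_exp : gphi = fun x => (√(2 * π))⁻¹ * exp (-(1 / 2) * x ^ 2) := by
  ext x; rw [gphi, div_eq_inv_mul]; ring_nf

lemma integrable_gphi : Integrable gphi :=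
  gphi_eq_mul_exp ▸ (integrable_exp_neg_mul_sq (by norm_num : (0 : ℝ) < 1 / 2)).const_mul _

lemma hasDerivAt_gphi (x : ℝ) : HasDerivAt gphi (-x * gphi x) x := by
  rw [gphi_eq_mul_exp]
  refine ((((hasDerivAt_pow 2 x).const_mul (-(1 / 2) : ℝ)).exp).const_mul _).congr_deriv ?_
  push_cast; ring

lemma gphi_le_gphi_zero (x : ℝ) : gphi x ≤ gphi 0 := by
  rw [gphi, gphi, div_le_div_iff_of_pos_right (by positivity), exp_le_exp]
  nlinarith [sq_nonneg x]

lemma integrable_one_add_abs_sq_mul_gphi : Integrable fun z : ℝ => (1 + |z|) ^ 2 * gphi z := by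
  have h0 := integrable_exp_neg_mul_sq (by norm_num : (0 : ℝ) < 1 / 2)
  have h2 := integrable_rpow_mul_exp_neg_mul_sq (by norm_num : (0 : ℝ) < 1 / 2)
    (by norm_num : (-1 : ℝ) < 2)
  simp only [rpow_two] at h2
  refine ((h0.add h2).const_mul (2 * (√(2 * π))⁻¹)).mono'
    (((continuous_const.add continuous_abs).pow 2).mul continuous_gphi).aestronglyMeasurable
    (Eventually.of_forall fun z => ?_)
  rw [norm_of_nonneg (mul_nonneg (sq_nonneg _) (gphi_pos z).le), gphi_eq_mul_exp, Pi.add_apply]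
  have : (1 + |z|) ^ 2 ≤ 2 * (1 + z ^ 2) := by nlinarith [sq_abs z, sq_nonneg (|z| - 1)]
  calc (1 + |z|) ^ 2 * ((√(2 * π))⁻¹ * exp (-(1 / 2) * z ^ 2))
      ≤ 2 * (1 + z ^ 2) * ((√(2 * π))⁻¹ * exp (-(1 / 2) * z ^ 2)) := by gcongr
    _ = _ := by ring

lemma Phibar_sub_Phibar (x y : ℝ) : Phibar x - Phibar y = ∫ t in x..y, gphi t :=
  intervalIntegral.integral_Ioi_sub_Ioi' integrable_gphi.integrableOn integrable_gphi.integrableOn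

lemma hasDerivAt_Phibar (x : ℝ) : HasDerivAt Phibar (-gphi x) x := by
  have h := (intervalIntegral.integral_hasDerivAt_right (a := 0) (b := x)
    integrable_gphi.intervalIntegrable (continuous_gphi.stronglyMeasurableAtFilter _ _)
    continuous_gphi.continuousAt).const_sub (Phibar 0)
  refine h.congr_of_eventuallyEq (Eventually.of_forall fun y => ?_)
  simp only [← Phibar_sub_Phibar, sub_sub_cancel]

lemma continuous_Phibar : Continuous Phibar :=
  continuous_iff_continuousAt.2 fun x => (hasDerivAt_Phibar x).continuousAt

lemma tendsto_Phibar_atTop : Tendsto Phibar atTop (nhds 0) :=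
  tendsto_integral_Ioi_zero tendsto_id

lemma Phibar_nonneg (x : ℝ) : 0 ≤ Phibar x :=
  setIntegral_nonneg measurableSet_Ioi fun u _ => (gphi_pos u).le

lemma strictAnti_Phibar : StrictAnti Phibar :=
  strictAnti_of_hasDerivAt_neg hasDerivAt_Phibar fun x => neg_neg_of_pos (gphi_pos x)

lemma Phibar_pos (x : ℝ) : 0 < Phibar x :=
  (Phibar_nonneg (x + 1)).trans_lt (strictAnti_Phibar (lt_add_one x))

/-- `Φ̄(y) - φ(y)/(y+1)` is antitone on `[0, ∞)` and tends to `0`, hence is nonnegative there. -/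
lemma gphi_div_add_one_le_Phibar {x : ℝ} (hx : 0 ≤ x) : gphi x / (x + 1) ≤ Phibar x := by
  set H : ℝ → ℝ := fun y => Phibar y - gphi y / (y + 1)
  have hderiv : ∀ y ∈ Ioi (0 : ℝ), HasDerivAt H (-y * gphi y / (y + 1) ^ 2) y := by
    intro y hy
    have hy1 : y + 1 ≠ 0 := by linarith [mem_Ioi.1 hy]
    refine ((hasDerivAt_Phibar y).sub
      ((hasDerivAt_gphi y).div ((hasDerivAt_id y).add_const 1) hy1)).congr_deriv ?_
    simp only [id]
    field_simp
    ring
  have hanti : AntitoneOn H (Ici 0) := by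
    refine antitoneOn_of_hasDerivWithinAt_nonpos (f' := fun y => -y * gphi y / (y + 1) ^ 2)
      (convex_Ici 0) ?_ ?_ ?_
    · exact continuous_Phibar.continuousOn.sub (continuous_gphi.continuousOn.div
        (by fun_prop) fun y hy => by linarith [mem_Ici.1 hy])
    · intro y hy
      rw [interior_Ici] at hy ⊢
      exact (hderiv y hy).hasDerivWithinAt
    · intro y hy
      rw [interior_Ici] at hy
      have := gphi_pos y
      have : 0 < y := hy
      apply div_nonpos_of_nonpos_of_nonneg <;> nlinarith
  have hlim : Tendsto H atTop (nhds 0) := by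
    have h : Tendsto (fun y => gphi y / (y + 1)) atTop (nhds 0) := by
      refine squeeze_zero' (eventually_ge_atTop 0 |>.mono fun y hy => ?_)
        (eventually_ge_atTop 0 |>.mono fun y hy => ?_)
        ((tendsto_const_nhds (x := gphi 0)).div_atTop
          (tendsto_atTop_add_const_right _ 1 tendsto_id))
      · exact div_nonneg (gphi_pos y).le (by linarith)
      · exact div_le_div_of_nonneg_right (gphi_le_gphi_zero y) (by linarith)
    simpa using tendsto_Phibar_atTop.sub h
  have : 0 ≤ H x := le_of_tendsto hlim <|
    (eventually_ge_atTop x).mono fun y hy => hanti hx (hx.trans hy) hy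
  simpa [H] using this

lemma gaussE_nonneg (x : ℝ) : 0 ≤ gaussE x :=
  div_nonneg (gphi_pos x).le (Phibar_pos x).le

lemma continuous_gaussE : Continuous gaussE :=
  continuous_gphi.div continuous_Phibar fun x => (Phibar_pos x).ne'

lemma hasDerivAt_gaussE (x : ℝ) : HasDerivAt gaussE (gaussE x * (gaussE x - x)) x := by
  refine ((hasDerivAt_gphi x).div (hasDerivAt_Phibar x) (Phibar_pos x).ne').congr_deriv ?_
  have := (Phibar_pos x).ne'
  unfold gaussE
  field_simp
  ring

lemma gaussE_le_abs_add_one (x : ℝ) : gaussE x ≤ |x| + 1 := by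
  rw [gaussE, div_le_iff₀ (Phibar_pos x)]
  rcases le_total 0 x with hx | hx
  · have := gphi_div_add_one_le_Phibar hx
    rw [div_le_iff₀ (by linarith)] at this
    rw [abs_of_nonneg hx]
    linarith
  · have h0 : gphi 0 ≤ Phibar 0 := by simpa using gphi_div_add_one_le_Phibar le_rfl
    have := (gphi_le_gphi_zero x).trans (h0.trans (strictAnti_Phibar.antitone hx))
    nlinarith [abs_nonneg x, Phibar_pos x]

lemma integrable_mul_mul_gphi {f g : ℝ → ℝ} (hf : Continuous f) (hg : Continuous g) {A B : ℝ}
    (hfA : ∀ z, |f z| ≤ A * (1 + |z|)) (hgB : ∀ z, |g z| ≤ B * (1 + |z|)) :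
    Integrable fun z => f z * g z * gphi z := by
  refine (integrable_one_add_abs_sq_mul_gphi.const_mul (A * B)).mono'
    ((hf.mul hg).mul continuous_gphi).aestronglyMeasurable (Eventually.of_forall fun z => ?_)
  rw [norm_mul, norm_mul, norm_of_nonneg (gphi_pos z).le, norm_eq_abs, norm_eq_abs]
  calc |f z| * |g z| * gphi z ≤ A * (1 + |z|) * (B * (1 + |z|)) * gphi z :=
        mul_le_mul_of_nonneg_right
          (mul_le_mul (hfA z) (hgB z) (abs_nonneg _) ((abs_nonneg _).trans (hfA z)))
          (gphi_pos z).le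
    _ = A * B * ((1 + |z|) ^ 2 * gphi z) := by ring

theorem integral_deriv_mul_gphi {h h' : ℝ → ℝ} (hh : ∀ z, HasDerivAt h (h' z) z)
    (hh' : Integrable fun z => h' z * gphi z) (hzh : Integrable fun z => z * h z * gphi z)
    (hhφ : Integrable fun z => h z * gphi z) :
    ∫ z, h' z * gphi z = ∫ z, z * h z * gphi z := by
  have := integral_mul_deriv_eq_deriv_mul_of_integrable (fun z _ => hh z)
    (fun z _ => hasDerivAt_gphi z) (hzh.neg.congr (Eventually.of_forall fun z => by simp; ring))
    hh' hhφ
  simp only [mul_neg, neg_mul, integral_neg, neg_inj] at this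
  rw [← this]; congr 1; ext z; ring

lemma abs_add_mul_le (a b z : ℝ) : |a + b * z| ≤ (|a| + |b|) * (1 + |z|) := by
  calc |a + b * z| ≤ |a| + |b| * |z| := by rw [← abs_mul]; exact abs_add_le _ _
    _ ≤ (|a| + |b|) * (1 + |z|) := by nlinarith [abs_nonneg a, abs_nonneg b, abs_nonneg z]

lemma abs_gaussE_add_mul_le (a b z : ℝ) : |gaussE (a + b * z)| ≤ (|a| + |b| + 1) * (1 + |z|) := by
  rw [abs_of_nonneg (gaussE_nonneg _)]
  nlinarith [gaussE_le_abs_add_one (a + b * z), abs_add_mul_le a b z, abs_nonneg z]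

theorem integral_gaussE_mul_eq_integral_gaussE_sq (a b : ℝ) (hb : b ≠ 0) :
    ∫ z, gaussE (a + b * z) * (a + b * z + z / b) * gphi z =
      ∫ z, gaussE (a + b * z) ^ 2 * gphi z := by
  set E : ℝ → ℝ := fun z => gaussE (a + b * z)
  have hEc : Continuous E := continuous_gaussE.comp (by fun_prop)
  have huc : Continuous fun z => a + b * z := by fun_prop
  have hu := abs_add_mul_le a b
  have hE : ∀ z, |E z| ≤ (|a| + |b| + 1) * (1 + |z|) := abs_gaussE_add_mul_le a b
  have hderiv : ∀ z, HasDerivAt E (E z * (b * (E z - (a + b * z)))) z := fun z => by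
    refine ((hasDerivAt_gaussE _).comp z
      (((hasDerivAt_id z).const_mul b).const_add a)).congr_deriv ?_
    simp only [E, id]; ring
  have int_Eu := integrable_mul_mul_gphi hEc huc hE hu
  have int_zE : Integrable fun z => z * E z * gphi z :=
    integrable_mul_mul_gphi continuous_id hEc (A := 1) (fun z => by simp) hE
  have int_E : Integrable fun z => E z * gphi z := by
    simpa using integrable_mul_mul_gphi (g := fun _ => 1) (B := 1) hEc continuous_const hE
      (fun z => by simp)
  have int_deriv : Integrable fun z => E z * (b * (E z - (a + b * z))) * gphi z :=
    ((integrable_mul_mul_gphi hEc hEc hE hE |>.sub int_Eu).const_mul b).congr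
      (Eventually.of_forall fun z => by simp only [Pi.sub_apply]; ring)
  have stein := integral_deriv_mul_gphi hderiv int_deriv int_zE int_E
  calc ∫ z, E z * (a + b * z + z / b) * gphi z
      = ∫ z, (E z * (a + b * z) * gphi z + b⁻¹ * (z * E z * gphi z)) := by
        congr 1; ext z; field_simp
    _ = ∫ z, (E z * (a + b * z) * gphi z
          + b⁻¹ * (E z * (b * (E z - (a + b * z))) * gphi z)) := by
        rw [integral_add int_Eu (int_zE.const_mul _), integral_const_mul, ← stein,
          integral_add int_Eu (int_deriv.const_mul _), integral_const_mul]
    _ = ∫ z, E z ^ 2 * gphi z := by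
        congr 1; ext z; field_simp; ring

theorem fixedPoint_integration_by_parts_general (κ α q ψ : ℝ)
    (hq : q ∈ Set.Ioo (0 : ℝ) 1)
    (h1 : ψ = Rfun κ q α) :
    α * ∫ z : ℝ, gaussE ((κ - Real.sqrt q * z) / Real.sqrt (1 - q))
        * ((κ - z / Real.sqrt q) / Real.sqrt (1 - q)) * gphi z = ψ * (1 - q) := by
  obtain ⟨hq0, hq1⟩ := hq
  have hsq : 0 < √q := sqrt_pos.2 hq0
  have hs1 : 0 < √(1 - q) := sqrt_pos.2 (by linarith)
  set a := κ / √(1 - q)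
  set b := -(√q / √(1 - q))
  have hb : b ≠ 0 := neg_ne_zero.2 (by positivity)
  have hu : ∀ z, (κ - √q * z) / √(1 - q) = a + b * z := fun z => by ring
  have hv : ∀ z, (κ - z / √q) / √(1 - q) = a + b * z + z / b := fun z => by
    simp only [a, b]
    field_simp
    linear_combination z * sq_sqrt hq0.le + z * sq_sqrt (by linarith : 0 ≤ 1 - q)
  have hF : ∀ z, Fq κ q (√q * z) ^ 2 * gphi z = gaussE (a + b * z) ^ 2 * gphi z / (1 - q) :=
    fun z => by rw [Fq, hu, div_pow, sq_sqrt (by linarith), div_mul_eq_mul_div]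
  simp_rw [hu, hv, integral_gaussE_mul_eq_integral_gaussE_sq a b hb, h1, Rfun, hF]
  rw [integral_div]
  field_simp [(by linarith : 1 - q ≠ 0)]

/-- If `(q, ψ)` solves the fixed-point relations `ψ = R_κ(q, α)` and
`q = P(ψ)`, then `α ∫ 𝓔((κ - √q z)/√(1-q)) ((κ - z/√q)/√(1-q)) φ(z) dz = ψ(1-q)`. -/
theorem fixedPoint_integration_by_parts (κ α q ψ : ℝ) (hα : 0 ≤ α)
    (hq : q ∈ Set.Ioo (0 : ℝ) 1) (hψ : 0 ≤ ψ)
    (h1 : ψ = Rfun κ q α) (h2 : q = Pfun ψ) :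
    α * ∫ z : ℝ, gaussE ((κ - Real.sqrt q * z) / Real.sqrt (1 - q))
        * ((κ - z / Real.sqrt q) / Real.sqrt (1 - q)) * gphi z = ψ * (1 - q) :=
  fixedPoint_integration_by_parts_general κ α q ψ hq h1
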